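/- arXiv:2011.15055 — 2 statements merged into one kernel-verified Lean document; each statement's English description precedes it below -/
import Mathlib

section
/- Fix integers c ≥ 3 and h ≥ 1 and a positive real number α, and let T_{c,h,α} be the perfect c-ary tree of height h with every edge weight equal to α. Then f₃(T_{c,h,α}; n) ≈ n^(c^h): there is a constant C > 0 such that every set of n points in ℝ³ contains at most C · n^(c^h) distance T_{c,h,α}-configurations, and there exist a constant c' > 0 and N such that for every n > N some set of n points in ℝ³ contains at least c' · n^(c^h) distance T_{c,h,α}-configurations. -/
open scoped InnerProductSpace

noncomputable section

/-- Points in three-dimensional space. -/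
abbrev Pt3 : Type := EuclideanSpace ℝ (Fin 3)

/-- The vertex set of the perfect `c`-ary rooted tree `T_{c,h}` of height `h`: a vertex is
a list of child-selectors of length at most `h` (the root is the empty list, and the
leaves are the lists of length exactly `h`), so there are `c ^ h` leaves. -/
def TreeVert (c h : ℕ) : Type := {l : List (Fin c) // l.length ≤ h}

/-- Adjacency in the perfect `c`-ary tree `T_{c,h}`: a vertex is adjacent precisely to its
parent and to its children. -/
def treeAdj (c h : ℕ) (u v : TreeVert c h) : Prop :=
  (∃ i : Fin c, u.1 = i :: v.1) ∨ (∃ i : Fin c, v.1 = i :: u.1)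

/-- The set of distance `T_{c,h,α}`-configurations in a point set `E ⊆ ℝ³`, where every
edge of `T_{c,h}` carries the same weight `α`: injective maps `φ` from the vertices of
`T_{c,h}` into `E` such that the distance between the images of any two adjacent vertices
equals `α`. -/
def distTreeConfigs3 (c h : ℕ) (α : ℝ) (E : Finset Pt3) : Set (TreeVert c h → Pt3) :=
  {φ | (∀ v, φ v ∈ E) ∧ Function.Injective φ ∧
    ∀ u v, treeAdj c h u v → ‖φ u - φ v‖ = α}

/-!
Upper bound: three distinct points of `ℝ³` have at most two common points at distance `α`
(two triples of distinct points at constant mutual distance would span orthogonal planes). As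
every non-leaf vertex has at least three children, with distinct images, a configuration is
determined by its leaves together with one bit per vertex, recording whether the vertex sits at
a fixed choice among those two points. Hence there are at most `2 ^ |T| · n ^ (c ^ h)`
configurations.

Lower bound: put the non-leaf vertices in the plane `z = 0`, with pairwise distinct
`x`-coordinates in `(0, α / 2]` and `y`-coordinates chosen so that every edge has length `α`.
Each leaf may then go to any of `M` points on the half-circle of radius `α` around its parent in
the plane `x = const`, `z > 0`, distinct leaves using distinct points. These `O(M)` points carry
`M ^ (c ^ h)` configurations; padding to exactly `n` points gives the bound.
-/

open Module EuclideanGeometry Real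

theorem not_injective_of_forall_dist_eq {V : Type*} [NormedAddCommGroup V]
    [InnerProductSpace ℝ V] [FiniteDimensional ℝ V] (hV : finrank ℝ V ≤ 3)
    {p q : Fin 3 → V} {r : ℝ} (hp : Function.Injective p) (hpq : ∀ i j, dist (p i) (q j) = r) :
    ¬ Function.Injective q := by
  intro hq
  have hp2 : finrank ℝ (vectorSpan ℝ (Set.range p)) = 2 :=
    (Cospherical.affineIndependent ⟨q 0, r, by rintro _ ⟨i, rfl⟩; exact hpq i 0⟩
      subset_rfl hp).finrank_vectorSpan (by simp)
  have hq2 : finrank ℝ (vectorSpan ℝ (Set.range q)) = 2 :=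
    (Cospherical.affineIndependent ⟨p 0, r, by rintro _ ⟨j, rfl⟩; rw [dist_comm]; exact hpq 0 j⟩
      subset_rfl hq).finrank_vectorSpan (by simp)
  have hortho : vectorSpan ℝ (Set.range p) ⟂ vectorSpan ℝ (Set.range q) := by
    rw [vectorSpan_def, vectorSpan_def, Submodule.isOrtho_span]
    rintro _ ⟨_, ⟨i, rfl⟩, _, ⟨i', rfl⟩, rfl⟩ _ ⟨_, ⟨j, rfl⟩, _, ⟨j', rfl⟩, rfl⟩
    exact inner_vsub_vsub_of_dist_eq_of_dist_eq (by simp only [dist_comm (q _), hpq])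
      (by simp only [dist_comm (q _), hpq])
  have := Submodule.finrank_mono (Submodule.isOrtho_iff_le.mp hortho)
  have := (vectorSpan ℝ (Set.range q)).finrank_add_finrank_orthogonal
  omega

theorem eq_of_mem_of_eq_epsilon_iff {X : Type*} [Nonempty X] {S : Set X}
    (hS : ∀ x ∈ S, ∀ y ∈ S, ∀ z ∈ S, x = y ∨ x = z ∨ y = z) {x y : X} (hx : x ∈ S) (hy : y ∈ S)
    (hxy : x = Classical.epsilon (· ∈ S) ↔ y = Classical.epsilon (· ∈ S)) : x = y := by
  have hε : Classical.epsilon (· ∈ S) ∈ S := Classical.epsilon_spec ⟨x, hx⟩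
  by_cases hxε : x = Classical.epsilon (· ∈ S)
  · rw [hxε, ← hxy.mp hxε]
  · rcases hS _ hε x hx y hy with h | h | h
    · exact absurd h.symm hxε
    · exact absurd h.symm (mt hxy.mpr hxε)
    · exact h

namespace TreeVert

variable {c h : ℕ}

instance : Fintype (TreeVert c h) := (List.finite_length_le (Fin c) h).fintype

def ofLeaf (l : List.Vector (Fin c) h) : TreeVert c h := ⟨l.1, l.2.le⟩

def child (v : TreeVert c h) (i : Fin c) (hv : v.1.length < h) : TreeVert c h := ⟨i :: v.1, hv⟩

theorem child_injective (v : TreeVert c h) (hv : v.1.length < h) :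
    Function.Injective fun i => v.child i hv := fun _ _ hij =>
  (List.cons_eq_cons.mp (congrArg Subtype.val hij)).1

end TreeVert

section Configurations

variable {c h : ℕ} {α : ℝ} {E : Finset Pt3} {φ : TreeVert c h → Pt3}

theorem finite_distTreeConfigs3 (c h : ℕ) (α : ℝ) (E : Finset Pt3) :
    (distTreeConfigs3 c h α E).Finite :=
  (Set.Finite.pi fun _ => E.finite_toSet).subset fun _ hφ => Set.mem_univ_pi.mpr hφ.1

theorem distTreeConfigs3_mono (c h : ℕ) (α : ℝ) : Monotone (distTreeConfigs3 c h α) :=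
  fun _ _ hEF _ hφ => ⟨fun v => hEF (hφ.1 v), hφ.2⟩

theorem monotone_ncard_distTreeConfigs3 (c h : ℕ) (α : ℝ) :
    Monotone fun E => (distTreeConfigs3 c h α E).ncard :=
  fun _ F hEF =>
    Set.ncard_le_ncard (distTreeConfigs3_mono c h α hEF) (finite_distTreeConfigs3 c h α F)

theorem dist_child_of_mem_distTreeConfigs3 (hφ : φ ∈ distTreeConfigs3 c h α E)
    (v : TreeVert c h) (i : Fin c) (hv : v.1.length < h) : dist (φ v) (φ (v.child i hv)) = α := by
  rw [dist_eq_norm, norm_sub_rev]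
  exact hφ.2.2 _ _ (Or.inl ⟨i, rfl⟩)

theorem mem_distTreeConfigs3_of_dist_child (hE : ∀ v, φ v ∈ E) (hφ : Function.Injective φ)
    (hchild : ∀ (v : TreeVert c h) (i : Fin c) (hv : v.1.length < h),
      dist (φ (v.child i hv)) (φ v) = α) :
    φ ∈ distTreeConfigs3 c h α E := by
  refine ⟨hE, hφ, ?_⟩
  rintro ⟨u, hu⟩ ⟨v, hv⟩ (⟨i, rfl⟩ | ⟨i, rfl⟩)
  · rw [← dist_eq_norm]
    exact hchild ⟨v, hv⟩ i hu
  · rw [← dist_eq_norm, dist_comm]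
    exact hchild ⟨u, hu⟩ i hv

end Configurations

section UpperBound

variable {c h : ℕ} {α : ℝ} {E : Finset Pt3} {φ ψ : TreeVert c h → Pt3}

def parentSites (α : ℝ) (φ : TreeVert c h → Pt3) (v : TreeVert c h) : Set Pt3 :=
  {x | ∀ (i : Fin c) (hv : v.1.length < h), dist x (φ (v.child i hv)) = α}

theorem mem_parentSites (hφ : φ ∈ distTreeConfigs3 c h α E) (v : TreeVert c h) :
    φ v ∈ parentSites α φ v :=
  fun i hv => dist_child_of_mem_distTreeConfigs3 hφ v i hv

theorem parentSites_eq_or_eq_or_eq (hc : 3 ≤ c) (hφ : Function.Injective φ) {v : TreeVert c h}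
    (hv : v.1.length < h) :
    ∀ x ∈ parentSites α φ v, ∀ y ∈ parentSites α φ v, ∀ z ∈ parentSites α φ v,
      x = y ∨ x = z ∨ y = z := by
  intro x hx y hy z hz
  by_contra! hxyz
  obtain ⟨hxy, hxz, hyz⟩ := hxyz
  refine not_injective_of_forall_dist_eq (finrank_euclideanSpace_fin.le)
    (r := α) (p := ![x, y, z]) (q := fun i => φ (v.child (Fin.castLE hc i) hv)) ?_ ?_
    (hφ.comp ((v.child_injective hv).comp (Fin.castLE_injective hc)))
  · simp [Function.Injective, Fin.forall_fin_succ, hxy, hxz, hyz, hxy.symm, hxz.symm, hyz.symm]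
  · intro i j
    fin_cases i
    exacts [hx _ hv, hy _ hv, hz _ hv]

theorem eq_of_eq_on_leaves (hc : 3 ≤ c) (hφ : φ ∈ distTreeConfigs3 c h α E)
    (hψ : ψ ∈ distTreeConfigs3 c h α E)
    (hleaf : ∀ l, φ (TreeVert.ofLeaf l) = ψ (TreeVert.ofLeaf l))
    (hsite : ∀ v, φ v = Classical.epsilon (· ∈ parentSites α φ v) ↔
      ψ v = Classical.epsilon (· ∈ parentSites α ψ v)) :
    φ = ψ := by
  suffices ∀ n, ∀ v : TreeVert c h, v.1.length + n = h → φ v = ψ v from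
    funext fun v => this _ v (Nat.add_sub_of_le v.2)
  intro n
  induction n with
  | zero => exact fun v hv => hleaf ⟨v.1, hv⟩
  | succ n ih =>
    intro v hvn
    have hv : v.1.length < h := by omega
    have hsites : parentSites α φ v = parentSites α ψ v := by
      have hchild : ∀ i, φ (v.child i hv) = ψ (v.child i hv) :=
        fun i => ih _ (by simp only [TreeVert.child, List.length_cons]; omega)
      simp only [parentSites, hchild]
    have hψv := mem_parentSites hψ v
    have hsitev := hsite v
    rw [← hsites] at hψv hsitev
    exact eq_of_mem_of_eq_epsilon_iff (parentSites_eq_or_eq_or_eq hc hφ.2.1 hv)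
      (mem_parentSites hφ v) hψv hsitev

theorem ncard_distTreeConfigs3_le (hc : 3 ≤ c) (α : ℝ) (E : Finset Pt3) :
    (distTreeConfigs3 c h α E).ncard ≤ E.card ^ c ^ h * 2 ^ Fintype.card (TreeVert c h) := by
  let record : distTreeConfigs3 c h α E → (List.Vector (Fin c) h → E) × (TreeVert c h → Prop) :=
    fun φ => (fun l => ⟨φ.1 (.ofLeaf l), φ.2.1 _⟩,
      fun v => φ.1 v = Classical.epsilon (· ∈ parentSites α φ.1 v))
  have hrecord : Function.Injective record := by
    rintro ⟨φ, hφ⟩ ⟨ψ, hψ⟩ hφψ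
    simp only [record, Prod.mk.injEq] at hφψ
    exact Subtype.ext <| eq_of_eq_on_leaves hc hφ hψ
      (fun l => congrArg Subtype.val (congrFun hφψ.1 l)) (fun v => iff_of_eq (congrFun hφψ.2 v))
  calc (distTreeConfigs3 c h α E).ncard
      = Nat.card (distTreeConfigs3 c h α E) := (Nat.card_coe_set_eq _).symm
    _ ≤ Nat.card ((List.Vector (Fin c) h → E) × (TreeVert c h → Prop)) :=
      Nat.card_le_card_of_injective record hrecord
    _ = E.card ^ c ^ h * 2 ^ Fintype.card (TreeVert c h) := by
      simp [Nat.card_fun, Nat.card_eq_fintype_card, card_vector]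

end UpperBound

theorem dist_vec3_eq {a b d a' b' d' r : ℝ} (hr : 0 ≤ r)
    (h : (a - a') ^ 2 + (b - b') ^ 2 + (d - d') ^ 2 = r ^ 2) :
    dist (!₂[a, b, d] : Pt3) !₂[a', b', d'] = r := by
  simp [EuclideanSpace.dist_eq, Fin.sum_univ_three, Real.dist_eq, sq_abs, h, Real.sqrt_sq hr]

section LowerBound

variable (α : ℝ) {c h M : ℕ}

def xCoord (l : List (Fin c)) : ℝ := α / (2 * (Encodable.encode l + 1))

def yCoord : List (Fin c) → ℝ
  | [] => 0
  | i :: l => yCoord l + √(α ^ 2 - (xCoord α (i :: l) - xCoord α l) ^ 2)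

def spinePt (l : List (Fin c)) : Pt3 := !₂[xCoord α l, yCoord α l, 0]

def leafAngle (l : List (Fin c)) (j : Fin M) : ℝ := π / (Encodable.encode (l, j) + 2)

def leafPt (l : List (Fin c)) (j : Fin M) : Pt3 :=
  !₂[xCoord α l.tail, yCoord α l.tail + α * cos (leafAngle l j), α * sin (leafAngle l j)]

def treePt (σ : List.Vector (Fin c) h → Fin M) (v : TreeVert c h) : Pt3 :=
  if hv : v.1.length = h then leafPt α v.1 (σ ⟨v.1, hv⟩) else spinePt α v.1

def treePtSet (c h M : ℕ) : Finset Pt3 :=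
  Finset.univ.image (fun v : TreeVert c h => spinePt α v.1) ∪
    Finset.univ.image (fun p : List.Vector (Fin c) h × Fin M => leafPt α p.1.1 p.2)

variable {α}

theorem xCoord_pos (hα : 0 < α) (l : List (Fin c)) : 0 < xCoord α l := by
  unfold xCoord; positivity

theorem xCoord_le (hα : 0 < α) (l : List (Fin c)) : xCoord α l ≤ α / 2 := by
  have := (Encodable.encode l).cast_nonneg (α := ℝ)
  exact div_le_div_of_nonneg_left hα.le two_pos (by linarith)

theorem xCoord_injective (hα : α ≠ 0) : Function.Injective (xCoord α : List (Fin c) → ℝ) := by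
  intro l l' hll'
  simp only [xCoord] at hll'
  field_simp at hll'
  exact Encodable.encode_injective (Nat.cast_injective (R := ℝ) (by linarith))

theorem dist_spinePt_cons (hα : 0 < α) (i : Fin c) (l : List (Fin c)) :
    dist (spinePt α (i :: l)) (spinePt α l) = α := by
  have hx : (xCoord α (i :: l) - xCoord α l) ^ 2 ≤ α ^ 2 := by
    have := xCoord_pos hα (i :: l); have := xCoord_pos hα l
    have := xCoord_le hα (i :: l); have := xCoord_le hα l
    exact sq_le_sq' (by linarith) (by linarith)
  apply dist_vec3_eq hα.le
  simp only [yCoord, add_sub_cancel_left, sub_zero, Real.sq_sqrt (sub_nonneg.mpr hx)]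
  ring

theorem dist_leafPt (hα : 0 ≤ α) (l : List (Fin c)) (j : Fin M) :
    dist (leafPt α l j) (spinePt α l.tail) = α := by
  apply dist_vec3_eq hα
  linear_combination α ^ 2 * sin_sq_add_cos_sq (leafAngle l j)

theorem leafAngle_mem_Ioo (l : List (Fin c)) (j : Fin M) : leafAngle l j ∈ Set.Ioo 0 π := by
  unfold leafAngle
  constructor
  · positivity
  · exact div_lt_self pi_pos (by linarith [(Encodable.encode (l, j)).cast_nonneg (α := ℝ)])

theorem spinePt_injective (hα : α ≠ 0) : Function.Injective (spinePt α : List (Fin c) → Pt3) :=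
  fun l l' hll' => xCoord_injective hα (by simpa [spinePt] using congrArg (· 0) hll')

theorem leafPt_inj (hα : α ≠ 0) {l l' : List (Fin c)} {j j' : Fin M} :
    leafPt α l j = leafPt α l' j' ↔ l = l' ∧ j = j' := by
  refine ⟨fun hll' => ?_, fun ⟨hl, hj⟩ => hl ▸ hj ▸ rfl⟩
  have htail : l.tail = l'.tail := xCoord_injective hα (by simpa [leafPt] using congrArg (· 0) hll')
  have hcos : cos (leafAngle l j) = cos (leafAngle l' j') := by
    simpa [leafPt, htail, hα] using congrArg (· 1) hll'
  have hangle := injOn_cos (Set.Ioo_subset_Icc_self (leafAngle_mem_Ioo l j))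
    (Set.Ioo_subset_Icc_self (leafAngle_mem_Ioo l' j')) hcos
  simp only [leafAngle] at hangle
  field_simp at hangle
  exact Prod.mk.inj (Encodable.encode_injective (Nat.cast_injective (R := ℝ) (by linarith)))

theorem leafPt_ne_spinePt (hα : 0 < α) (l l' : List (Fin c)) (j : Fin M) :
    leafPt α l j ≠ spinePt α l' := by
  intro hll'
  have hz := congrArg (· 2) hll'
  simp only [leafPt, spinePt, Matrix.cons_val_two, Matrix.tail_cons, Matrix.head_cons,
    mul_eq_zero] at hz
  exact hz.elim hα.ne' (sin_pos_of_pos_of_lt_pi (leafAngle_mem_Ioo l j).1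
    (leafAngle_mem_Ioo l j).2).ne'

theorem treePt_mem_distTreeConfigs3 (hα : 0 < α) (σ : List.Vector (Fin c) h → Fin M) :
    treePt α σ ∈ distTreeConfigs3 c h α (treePtSet α c h M) := by
  refine mem_distTreeConfigs3_of_dist_child (fun v => ?_) ?_ fun v i hv => ?_
  · unfold treePt treePtSet
    split_ifs with hv
    · exact Finset.mem_union_right _ (Finset.mem_image.mpr ⟨(⟨v.1, hv⟩, σ ⟨v.1, hv⟩), by simp⟩)
    · exact Finset.mem_union_left _ (Finset.mem_image.mpr ⟨v, by simp⟩)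
  · rintro ⟨l, hl⟩ ⟨l', hl'⟩ hll'
    unfold treePt at hll'
    split_ifs at hll'
    · exact Subtype.ext ((leafPt_inj hα.ne').mp hll').1
    · exact absurd hll' (leafPt_ne_spinePt hα _ _ _)
    · exact absurd hll'.symm (leafPt_ne_spinePt hα _ _ _)
    · exact Subtype.ext (spinePt_injective hα.ne' hll')
  · unfold treePt
    rw [dif_neg hv.ne]
    split_ifs
    · exact dist_leafPt hα.le _ _
    · exact dist_spinePt_cons hα _ _

theorem treePt_ofLeaf (σ : List.Vector (Fin c) h → Fin M) (l : List.Vector (Fin c) h) :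
    treePt α σ (.ofLeaf l) = leafPt α l.1 (σ l) :=
  dif_pos l.2

theorem treePt_injective (hα : α ≠ 0) :
    Function.Injective (treePt α : (List.Vector (Fin c) h → Fin M) → TreeVert c h → Pt3) := by
  intro σ σ' hσσ'
  funext l
  have hl := congrFun hσσ' (.ofLeaf l)
  rw [treePt_ofLeaf, treePt_ofLeaf] at hl
  exact ((leafPt_inj hα).mp hl).2

theorem card_treePtSet_le (α : ℝ) (c h M : ℕ) :
    (treePtSet α c h M).card ≤ Fintype.card (TreeVert c h) + c ^ h * M := by
  refine (Finset.card_union_le _ _).trans (add_le_add Finset.card_image_le ?_)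
  simpa using Finset.card_image_le (s := Finset.univ)
    (f := fun p : List.Vector (Fin c) h × Fin M => leafPt α p.1.1 p.2)

theorem pow_le_ncard_distTreeConfigs3_treePtSet (hα : 0 < α) (c h M : ℕ) :
    M ^ c ^ h ≤ (distTreeConfigs3 c h α (treePtSet α c h M)).ncard := by
  have := (finite_distTreeConfigs3 c h α (treePtSet α c h M)).to_subtype
  calc M ^ c ^ h = Nat.card (List.Vector (Fin c) h → Fin M) := by
        simp [Nat.card_eq_fintype_card, card_vector]
    _ ≤ Nat.card (distTreeConfigs3 c h α (treePtSet α c h M)) :=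
        Nat.card_le_card_of_injective (fun σ => ⟨treePt α σ, treePt_mem_distTreeConfigs3 hα σ⟩)
          fun _ _ h => treePt_injective hα.ne' (congrArg Subtype.val h)
    _ = _ := Nat.card_coe_set_eq _

end LowerBound

theorem exists_card_eq_and_pow_le_of_card_le_mul {X : Type*} [Infinite X] {P : Finset X → ℕ}
    (hP : Monotone P) {K m : ℕ} (hK : 0 < K)
    (hcon : ∀ M, 0 < M → ∃ E : Finset X, E.card ≤ K * M ∧ M ^ m ≤ P E) :
    ∃ c' : ℝ, 0 < c' ∧ ∃ N : ℕ, ∀ n : ℕ, N < n →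
      ∃ E : Finset X, E.card = n ∧ c' * (n : ℝ) ^ m ≤ P E := by
  refine ⟨(1 / (2 * K)) ^ m, by positivity, K, fun n hn => ?_⟩
  have hM : 0 < n / K := Nat.div_pos hn.le hK
  obtain ⟨E₀, hE₀, hPE₀⟩ := hcon (n / K) hM
  obtain ⟨E, hE₀E, hE⟩ := Infinite.exists_superset_card_eq E₀ n
    (hE₀.trans (Nat.mul_div_le n K))
  refine ⟨E, hE, ?_⟩
  have hnM : (n : ℝ) / (2 * K) ≤ (n / K : ℕ) := by
    rw [div_le_iff₀ (by positivity)]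
    have : n < K * (n / K + 1) := by
      rw [mul_add, mul_one]; exact Nat.lt_mul_div_succ n hK
    exact_mod_cast (by nlinarith : n ≤ n / K * (2 * K))
  calc (1 / (2 * K) : ℝ) ^ m * (n : ℝ) ^ m = ((n : ℝ) / (2 * K)) ^ m := by
        rw [← mul_pow, one_div_mul_eq_div]
    _ ≤ ((n / K : ℕ) : ℝ) ^ m := by gcongr
    _ ≤ P E := by exact_mod_cast hPE₀.trans (hP hE₀E)

theorem distance_tree_bounds_threeDim_general (c h : ℕ) (hc : 3 ≤ c) (α : ℝ)
    (hα : 0 < α) :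
    (∃ C : ℝ, 0 < C ∧ ∀ (n : ℕ) (E : Finset Pt3), E.card = n →
      ((distTreeConfigs3 c h α E).ncard : ℝ) ≤ C * (n : ℝ) ^ (c ^ h)) ∧
    (∃ c' : ℝ, 0 < c' ∧ ∃ N : ℕ, ∀ n : ℕ, N < n →
      ∃ E : Finset Pt3, E.card = n ∧
        c' * (n : ℝ) ^ (c ^ h) ≤ ((distTreeConfigs3 c h α E).ncard : ℝ)) := by
  constructor
  · refine ⟨2 ^ Fintype.card (TreeVert c h), by positivity, fun n E hE => ?_⟩
    rw [← hE, mul_comm]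
    exact_mod_cast ncard_distTreeConfigs3_le hc α E
  · refine exists_card_eq_and_pow_le_of_card_le_mul (monotone_ncard_distTreeConfigs3 c h α)
      (K := Fintype.card (TreeVert c h) + c ^ h) (Nat.add_pos_right _ (pow_pos (by omega) _))
      fun M hM => ⟨treePtSet α c h M, ?_, pow_le_ncard_distTreeConfigs3_treePtSet hα c h M⟩
    have := Nat.le_mul_of_pos_right (Fintype.card (TreeVert c h)) hM
    linarith [card_treePtSet_le α c h M, add_mul (Fintype.card (TreeVert c h)) (c ^ h) M]

/-- **distance configurations on perfect `c`-ary trees with constant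
weight, in three dimensions.**  Fix `c ≥ 3`, `h ≥ 1`, and `α > 0`.  Then
`f₃(T_{c,h,α}; n) ≈ n^(c^h)`: there is `C > 0` such that every set of `n` points in `ℝ³`
has at most `C · n^(c^h)` distance `T_{c,h,α}`-configurations, and there are `c' > 0`
and `N` such that for every `n > N` some set of `n` points in `ℝ³` has at least
`c' · n^(c^h)` of them. -/
theorem distance_tree_bounds_threeDim (c h : ℕ) (hc : 3 ≤ c) (hh : 1 ≤ h) (α : ℝ)
    (hα : 0 < α) :
    (∃ C : ℝ, 0 < C ∧ ∀ (n : ℕ) (E : Finset Pt3), E.card = n →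
      ((distTreeConfigs3 c h α E).ncard : ℝ) ≤ C * (n : ℝ) ^ (c ^ h)) ∧
    (∃ c' : ℝ, 0 < c' ∧ ∃ N : ℕ, ∀ n : ℕ, N < n →
      ∃ E : Finset Pt3, E.card = n ∧
        c' * (n : ℝ) ^ (c ^ h) ≤ ((distTreeConfigs3 c h α E).ncard : ℝ)) :=
  distance_tree_bounds_threeDim_general c h hc α hα
end
end

section
/- Fix positive real numbers α₁, α₂. Then: (i) there is a constant C > 0 such that for every n and every set E of n points in ℝ², the number of ordered triples (x₁, x₂, x₃) of pairwise distinct points of E with ‖x₁ − x₂‖ = α₁ and ‖x₂ − x₃‖ = α₂ is at most C · n²; and (ii) there exist a constant c > 0 and N such that for every n > N there is a set E of n points in ℝ² containing at least c · n² such triples. That is, the maximum number of distance hinges of type (α₁, α₂) in an n-point planar set is ≈ n². -/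
open scoped InnerProductSpace

noncomputable section

/-- Points in the plane. -/
abbrev Pt2 : Type := EuclideanSpace ℝ (Fin 2)

/-- The set of distance hinges (2-chains) of type `(α₁, α₂)` in a point set `E`:
ordered triples `(x₁, x₂, x₃)` of pairwise distinct points of `E` with
`‖x₁ − x₂‖ = α₁` and `‖x₂ − x₃‖ = α₂`. -/
def distHinges (E : Finset Pt2) (α₁ α₂ : ℝ) : Set (Pt2 × Pt2 × Pt2) :=
  {x | x.1 ∈ E ∧ x.2.1 ∈ E ∧ x.2.2 ∈ E ∧
    x.1 ≠ x.2.1 ∧ x.1 ≠ x.2.2 ∧ x.2.1 ≠ x.2.2 ∧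
    ‖x.1 - x.2.1‖ = α₁ ∧ ‖x.2.1 - x.2.2‖ = α₂}

/-!
Upper bound: the endpoints `x₁ ≠ x₃` of a hinge determine its middle point up to two
choices, since it lies on the circles of radii `α₁` about `x₁` and `α₂` about `x₃`, and two
circles with distinct centres meet in at most two points. Hence there are at most `2n²` hinges.

Lower bound: take the origin, `k` points on the circle of radius `α₁` about it and `m` further
points on the circle of radius `α₂`. Every choice of one point on each circle gives a hinge
through the origin, so `n = k + m + 1` points carry `k * m ≈ n² / 4` hinges.
-/

open Finset Metric

theorem card_le_two_of_forall_dist_eq {V P : Type*} [NormedAddCommGroup V]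
    [InnerProductSpace ℝ V] [MetricSpace P] [NormedAddTorsor V P] [FiniteDimensional ℝ V]
    (hd : Module.finrank ℝ V = 2) {c₁ c₂ : P} (hc : c₁ ≠ c₂) {r₁ r₂ : ℝ} {S : Finset P}
    (hS : ∀ p ∈ S, dist p c₁ = r₁ ∧ dist p c₂ = r₂) : #S ≤ 2 := by
  by_contra! h
  obtain ⟨p₁, hp₁, p₂, hp₂, p, hp, h₁₂, h₁, h₂⟩ := two_lt_card.1 h
  rcases EuclideanGeometry.eq_of_dist_eq_of_dist_eq_of_finrank_eq_two hd hc h₁₂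
    (hS p₁ hp₁).1 (hS p₂ hp₂).1 (hS p hp).1 (hS p₁ hp₁).2 (hS p₂ hp₂).2 (hS p hp).2
    with rfl | rfl
  exacts [h₁ rfl, h₂ rfl]

theorem sphere_infinite {E : Type*} [NormedAddCommGroup E] [NormedSpace ℝ E]
    (h : 1 < Module.rank ℝ E) (x : E) {r : ℝ} (hr : 0 < r) : (sphere x r).Infinite := by
  have : Nontrivial E := rank_pos_iff_nontrivial.1 (zero_lt_one.trans h)
  obtain ⟨v, hv⟩ := exists_norm_eq E hr.le
  refine (isPreconnected_sphere h x r).infinite_of_nontrivial ⟨x + v, ?_, x - v, ?_, ?_⟩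
  · simp [hv]
  · simp [hv]
  · intro heq
    rw [sub_eq_add_neg, add_right_inj, eq_neg_iff_add_eq_zero, ← two_smul ℝ,
      smul_eq_zero] at heq
    rcases heq with h2 | rfl
    · norm_num at h2
    · simp [hr.ne] at hv

theorem one_lt_rank_pt2 : 1 < Module.rank ℝ Pt2 := by
  rw [← Module.finrank_eq_rank, finrank_euclideanSpace_fin]
  norm_num

open Classical in
def hingeFinset (E : Finset Pt2) (α₁ α₂ : ℝ) : Finset (Pt2 × Pt2 × Pt2) :=
  (E ×ˢ E ×ˢ E).filter (· ∈ distHinges E α₁ α₂)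

theorem coe_hingeFinset (E : Finset Pt2) (α₁ α₂ : ℝ) :
    (hingeFinset E α₁ α₂ : Set (Pt2 × Pt2 × Pt2)) = distHinges E α₁ α₂ := by
  ext x
  simp only [hingeFinset, coe_filter, mem_product, Set.mem_ofPred_eq, and_iff_right_iff_imp]
  exact fun h => ⟨h.1, h.2.1, h.2.2.1⟩

theorem ncard_distHinges (E : Finset Pt2) (α₁ α₂ : ℝ) :
    (distHinges E α₁ α₂).ncard = #(hingeFinset E α₁ α₂) := by
  rw [← coe_hingeFinset, Set.ncard_coe_finset]

theorem mk_mem_distHinges {E : Finset Pt2} {α₁ α₂ : ℝ} (h₁ : 0 < α₁) (h₂ : 0 < α₂)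
    {a c b : Pt2} (ha : a ∈ E) (hc : c ∈ E) (hb : b ∈ E) (hab : a ≠ b)
    (hac : dist a c = α₁) (hcb : dist c b = α₂) : (a, c, b) ∈ distHinges E α₁ α₂ := by
  refine ⟨ha, hc, hb, dist_pos.1 (hac ▸ h₁), hab, dist_pos.1 (hcb ▸ h₂), ?_, ?_⟩ <;>
    rwa [← dist_eq_norm]

open Classical in
theorem card_hinges_with_endpoints_le_two (E : Finset Pt2) (α₁ α₂ : ℝ) {a b : Pt2}
    (hab : a ≠ b) : #{x ∈ hingeFinset E α₁ α₂ | (x.1, x.2.2) = (a, b)} ≤ 2 := by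
  set F := {x ∈ hingeFinset E α₁ α₂ | (x.1, x.2.2) = (a, b)}
  have hinj : Set.InjOn (fun x : Pt2 × Pt2 × Pt2 => x.2.1) F := by
    intro x hx y hy hxy
    simp only [F, coe_filter, Set.mem_ofPred_eq, Prod.mk.injEq] at hx hy
    exact Prod.ext (hx.2.1.trans hy.2.1.symm) (Prod.ext hxy (hx.2.2.trans hy.2.2.symm))
  rw [← card_image_of_injOn hinj]
  refine card_le_two_of_forall_dist_eq finrank_euclideanSpace_fin hab (r₁ := α₁) (r₂ := α₂) ?_
  simp only [F, forall_mem_image, mem_filter, Prod.mk.injEq]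
  rintro x ⟨hx, rfl, rfl⟩
  rw [← mem_coe, coe_hingeFinset] at hx
  rw [dist_comm, dist_eq_norm, dist_eq_norm]
  exact ⟨hx.2.2.2.2.2.2.1, hx.2.2.2.2.2.2.2⟩

theorem card_hingeFinset_le (E : Finset Pt2) (α₁ α₂ : ℝ) :
    #(hingeFinset E α₁ α₂) ≤ 2 * #E ^ 2 := by
  classical
  calc #(hingeFinset E α₁ α₂) ≤ 2 * #E.offDiag := by
        refine card_le_mul_card_image_of_maps_to (f := fun x => (x.1, x.2.2)) ?_ 2 ?_
        · intro x hx
          rw [← mem_coe, coe_hingeFinset] at hx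
          exact mem_offDiag.2 ⟨hx.1, hx.2.2.1, hx.2.2.2.2.1⟩
        · rintro ⟨a, b⟩ hab
          exact card_hinges_with_endpoints_le_two E α₁ α₂ (mem_offDiag.1 hab).2.2
    _ ≤ 2 * #E ^ 2 := by
        rw [offDiag_card, sq]
        gcongr
        exact Nat.sub_le _ _

theorem exists_card_eq_le_ncard_distHinges {α₁ α₂ : ℝ} (h₁ : 0 < α₁) (h₂ : 0 < α₂)
    (k m : ℕ) : ∃ E : Finset Pt2, #E = k + m + 1 ∧ k * m ≤ (distHinges E α₁ α₂).ncard := by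
  obtain ⟨A, hA, hAk⟩ := (sphere_infinite one_lt_rank_pt2 0 h₁).exists_subset_card_eq k
  obtain ⟨B, hB, hBm⟩ :=
    ((sphere_infinite one_lt_rank_pt2 0 h₂).sdiff A.finite_toSet).exists_subset_card_eq m
  have hA' : ∀ a ∈ A, dist a 0 = α₁ := fun a ha => hA ha
  have hB' : ∀ b ∈ B, dist b 0 = α₂ ∧ b ∉ A := fun b hb => hB hb
  have hAB : Disjoint A B := disjoint_right.2 fun b hb => (hB' b hb).2
  have h0 : (0 : Pt2) ∉ A ∪ B := by
    rw [mem_union]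
    rintro (h | h)
    · simpa [h₁.ne] using hA' 0 h
    · simpa [h₂.ne] using (hB' 0 h).1
  refine ⟨insert 0 (A ∪ B), by rw [card_insert_of_notMem h0, card_union_of_disjoint hAB, hAk, hBm],
    ?_⟩
  have hsub : (A ×ˢ B).image (fun p => (p.1, 0, p.2)) ⊆ hingeFinset (insert 0 (A ∪ B)) α₁ α₂ := by
    rw [← coe_subset, coe_hingeFinset, coe_image]
    rintro _ ⟨⟨a, b⟩, hab, rfl⟩
    obtain ⟨ha, hb⟩ := mem_product.1 hab
    dsimp only at ha hb ⊢
    exact mk_mem_distHinges h₁ h₂ (by simp [ha]) (mem_insert_self _ _) (by simp [hb])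
      (fun h => (hB' b hb).2 (h ▸ ha)) (hA' a ha) (by rw [dist_comm]; exact (hB' b hb).1)
  have hinj : Function.Injective (fun p : Pt2 × Pt2 => (p.1, (0 : Pt2), p.2)) := fun p q h => by
    simp only [Prod.mk.injEq] at h
    exact Prod.ext h.1 h.2.2
  rw [ncard_distHinges, ← hAk, ← hBm, ← card_product, ← card_image_of_injective _ hinj]
  exact card_le_card hsub

theorem sq_le_sixteen_mul_halves {n : ℕ} (hn : 4 ≤ n) :
    n ^ 2 ≤ 16 * ((n - 1) / 2 * (n - 1 - (n - 1) / 2)) := by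
  obtain ⟨k, hk⟩ : ∃ k, k = (n - 1) / 2 := ⟨_, rfl⟩
  rw [← hk]
  have h₁ : n ≤ 2 * k + 2 := by omega
  have h₂ : k ≤ n - 1 - k := by omega
  have h₃ : 1 ≤ k := by omega
  nlinarith

/-- **distance hinges.** Fix positive reals `α₁, α₂`.  (i) There is
`C > 0` such that every set of `n` points in the plane contains at most `C · n²`
distance hinges of type `(α₁, α₂)`; (ii) there are `c > 0` and `N` such that for every
`n > N` some set of `n` points in the plane contains at least `c · n²` of them.  That
is, the maximum number of distance hinges of type `(α₁, α₂)` is `≈ n²`. -/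
theorem distance_hinge_bounds (α₁ α₂ : ℝ) (h₁ : 0 < α₁) (h₂ : 0 < α₂) :
    (∃ C : ℝ, 0 < C ∧ ∀ (n : ℕ) (E : Finset Pt2), E.card = n →
      ((distHinges E α₁ α₂).ncard : ℝ) ≤ C * (n : ℝ) ^ 2) ∧
    (∃ c : ℝ, 0 < c ∧ ∃ N : ℕ, ∀ n : ℕ, N < n →
      ∃ E : Finset Pt2, E.card = n ∧
        c * (n : ℝ) ^ 2 ≤ ((distHinges E α₁ α₂).ncard : ℝ)) := by
  refine ⟨⟨2, two_pos, fun n E hE => ?_⟩, ⟨1 / 16, by norm_num, 3, fun n hn => ?_⟩⟩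
  · rw [ncard_distHinges, ← hE]
    exact_mod_cast card_hingeFinset_le E α₁ α₂
  · obtain ⟨E, hE, hk⟩ :=
      exists_card_eq_le_ncard_distHinges h₁ h₂ ((n - 1) / 2) (n - 1 - (n - 1) / 2)
    refine ⟨E, by omega, ?_⟩
    rw [div_mul_eq_mul_div, one_mul, div_le_iff₀ (by norm_num)]
    exact_mod_cast ((sq_le_sixteen_mul_halves hn).trans (Nat.mul_le_mul_left 16 hk)).trans_eq
      (mul_comm _ _)
end
end
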